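/- For α ∈ (0,1) and x > 0, the Mittag-Leffler function satisfies the two-sided bounds 1/(1 + Γ(1−α)·x) ≤ E_α(−x) ≤ Γ(1+α)/(Γ(1+α) + x). -/

import Mathlib

/-- Two-parameter Mittag-Leffler function `E_{α,β}(z) = ∑ zⁿ/Γ(nα+β)`. -/
noncomputable def mlE (α β z : ℝ) : ℝ := ∑' n : ℕ, z ^ n / Real.Gamma (n * α + β)

/-!
Write `e_β(t) = t^{β-1} E_{α,β}(-t^α)` (`mlKernel α β t`). Integrating the series termwise against
Beta integrals gives the Riemann–Liouville identity `∫₀ᵗ (t-s)^{c-1} e_β(s) ds = Γ(c) e_{β+c}(t)`.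
With `u = e_1`, so that `u(t) = E_α(-t^α)`, and `v = e_α` it yields `∫₀ᵗ v = 1 - u(t)`,
`∫₀ᵗ (t-s)^{-α} v(s) ds = Γ(1-α) u(t)` and `∫₀ᵗ (t-s)^{α-1} u(s) ds = Γ(α) (1 - u(t))`.

The function `v` is positive. It is so near `0`; at a first zero `τ` the Volterra equation
`Γ(α) v(τ) = τ^{α-1} - ∫₀^τ (τ-s)^{α-1} v(s) ds`, compared through
`(τ-s)^{α-1} ≤ (τ/σ)^{α-1} (σ-s)^{α-1}` with the same equation at a point `σ < τ` close to `τ`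
where `v` is maximal on `[σ, τ]`, would force `Γ(α) v(τ) ≥ Γ(α) v(σ) / 2 -
v(σ) (τ-σ)^α / α > 0`. Hence `u` is decreasing, and the two bounds follow from the last two
identities by `(t-s)^{-α} ≥ t^{-α}` and `u(s) ≥ u(t)` respectively.
-/

open Real Set MeasureTheory Filter Topology

lemma rpow_mul_exp_neg_le_Gamma {M y : ℝ} (hM : 0 < M) (hy : 1 ≤ y) :
    M ^ y * exp (-(2 * M)) ≤ Gamma y := by
  have hsub : Ioc M (2 * M) ⊆ Ioi 0 := fun x hx => hM.trans hx.1
  have hint := GammaIntegral_convergent (zero_lt_one.trans_le hy)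
  calc M ^ y * exp (-(2 * M)) = ∫ _ in Ioc M (2 * M), exp (-(2 * M)) * M ^ (y - 1) := by
        rw [setIntegral_const, volume_real_Ioc_of_le (by linarith), smul_eq_mul,
          rpow_sub_one hM.ne']
        field_simp
        ring
    _ ≤ ∫ x in Ioc M (2 * M), exp (-x) * x ^ (y - 1) := by
        refine setIntegral_mono_on (integrableOn_const measure_Ioc_lt_top.ne)
          (hint.mono_set hsub) measurableSet_Ioc fun x hx => ?_
        gcongr
        · exact hx.2
        · exact hx.1.le
    _ ≤ ∫ x in Ioi 0, exp (-x) * x ^ (y - 1) :=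
        setIntegral_mono_set hint
          ((ae_restrict_mem measurableSet_Ioi).mono fun x (hx : 0 < x) => by positivity)
          hsub.eventuallyLE
    _ = Gamma y := (Gamma_eq_integral (zero_lt_one.trans_le hy)).symm

lemma summable_pow_div_Gamma {α : ℝ} (hα : 0 < α) (β z : ℝ) :
    Summable fun n : ℕ => z ^ n / Gamma (n * α + β) := by
  set M := (2 * |z| + 1) ^ α⁻¹
  have hM : 0 < M := by positivity
  have hMα : M ^ α = 2 * |z| + 1 := rpow_inv_rpow (by positivity) hα.ne'
  obtain ⟨N, hN⟩ := exists_nat_ge ((1 - β) / α)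
  rw [← summable_nat_add_iff N]
  refine Summable.of_norm_bounded
    ((summable_geometric_two).mul_left (exp (2 * M) / M ^ β)) fun n => ?_
  have hy : 1 ≤ ((n + N : ℕ) : ℝ) * α + β := by
    rw [div_le_iff₀ hα] at hN
    push_cast
    nlinarith [(n.cast_nonneg : (0 : ℝ) ≤ n)]
  have hΓ := rpow_mul_exp_neg_le_Gamma hM hy
  have hΓpos : 0 < Gamma (((n + N : ℕ) : ℝ) * α + β) := lt_of_lt_of_le (by positivity) hΓ
  rw [norm_div, norm_pow, Real.norm_eq_abs, Real.norm_eq_abs, abs_of_pos hΓpos,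
    div_le_iff₀ hΓpos]
  calc |z| ^ (n + N) ≤ (M ^ α / 2) ^ (n + N) := by
        gcongr
        linarith
    _ ≤ (M ^ α) ^ (n + N) * (1 / 2) ^ n := by
        rw [div_pow, div_eq_mul_one_div _ ((2 : ℝ) ^ (n + N)), one_div_pow]
        gcongr
        · norm_num
        · omega
    _ = exp (2 * M) / M ^ β * (1 / 2) ^ n *
          (M ^ (((n + N : ℕ) : ℝ) * α + β) * exp (-(2 * M))) := by
        rw [rpow_add hM, mul_comm _ α, rpow_mul hM.le, rpow_natCast, exp_neg]
        field_simp
    _ ≤ _ := by gcongr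

section
variable {α β : ℝ}

lemma mlE_zero (β : ℝ) : mlE α β 0 = 1 / Gamma β := by
  rw [mlE, tsum_eq_single 0 fun n hn => by simp [hn]]
  simp

lemma mlE_eq_one_div_Gamma_add_mul (hα : 0 < α) (β z : ℝ) :
    mlE α β z = 1 / Gamma β + z * mlE α (β + α) z := by
  rw [mlE, (summable_pow_div_Gamma hα β z).tsum_eq_zero_add, mlE, ← tsum_mul_left]
  congr 1
  · simp
  · refine tsum_congr fun n => ?_
    rw [pow_succ', mul_div_assoc]
    push_cast
    ring_nf

lemma abs_mlE_le (hα : 0 < α) (hβ : 0 < β) {z r : ℝ} (hz : |z| ≤ r) :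
    |mlE α β z| ≤ mlE α β r := by
  have hΓ (n : ℕ) : 0 < Gamma (n * α + β) := Gamma_pos_of_pos (by positivity)
  refine (norm_tsum_le_tsum_norm (summable_pow_div_Gamma hα β z).norm).trans
    (Summable.tsum_le_tsum (fun n => ?_) (summable_pow_div_Gamma hα β z).norm
      (summable_pow_div_Gamma hα β r))
  rw [norm_div, norm_pow, Real.norm_eq_abs, Real.norm_eq_abs, abs_of_pos (hΓ n)]
  gcongr

lemma continuous_mlE (hα : 0 < α) (β : ℝ) : Continuous (mlE α β) := by
  refine continuous_iff_continuousAt.2 fun z => ?_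
  set r := |z| + 1
  have hcont : ContinuousOn (mlE α β) (Metric.ball 0 r) :=
    continuousOn_tsum (fun n => by fun_prop) (summable_pow_div_Gamma hα β r).abs
      fun n x hx => by
        rw [mem_ball_zero_iff] at hx
        rw [norm_div, norm_pow, Real.norm_eq_abs, Real.norm_eq_abs, abs_div, abs_pow,
          abs_of_pos (by positivity : 0 < r)]
        gcongr
        exact hx.le
  exact hcont.continuousAt (Metric.isOpen_ball.mem_nhds (by simp [r]))

end

noncomputable def mlKernel (α β t : ℝ) : ℝ := t ^ (β - 1) * mlE α β (-t ^ α)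

section
variable {α β t : ℝ}

lemma rpow_natCast_mul_add_sub_one (ht : 0 < t) (n : ℕ) (α β : ℝ) :
    t ^ (n * α + β - 1) = t ^ (β - 1) * (t ^ α) ^ n := by
  rw [show n * α + β - 1 = β - 1 + α * n by ring, rpow_add ht, rpow_mul ht.le, rpow_natCast]

lemma hasSum_mlKernel (hα : 0 < α) (β : ℝ) (ht : 0 < t) :
    HasSum (fun n : ℕ => (-1) ^ n * (t ^ (n * α + β - 1) / Gamma (n * α + β)))
      (mlKernel α β t) := by
  refine ((summable_pow_div_Gamma hα β (-t ^ α)).hasSum.mul_left (t ^ (β - 1))).congr_fun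
    fun n => ?_
  rw [rpow_natCast_mul_add_sub_one ht, neg_pow]
  ring

lemma mlKernel_eq_sub (hα : 0 < α) (β : ℝ) (ht : 0 < t) :
    mlKernel α β t = t ^ (β - 1) / Gamma β - mlKernel α (β + α) t := by
  rw [mlKernel, mlKernel, mlE_eq_one_div_Gamma_add_mul hα, show β + α - 1 = β - 1 + α by ring,
    rpow_add ht]
  ring

lemma continuousOn_mlKernel (hα : 0 < α) (β : ℝ) : ContinuousOn (mlKernel α β) (Ioi 0) := by
  have := continuous_mlE hα β
  intro t (ht : 0 < t)
  unfold mlKernel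
  refine ContinuousAt.continuousWithinAt ?_
  fun_prop (disch := exact Or.inl ht.ne')

lemma measurable_mlKernel (hα : 0 < α) (β : ℝ) : Measurable (mlKernel α β) := by
  have := (continuous_mlE hα β).measurable
  unfold mlKernel
  fun_prop

lemma abs_mlKernel_le (hα : 0 < α) (hβ : 0 < β) {s : ℝ} (hs : 0 < s) (hst : s ≤ t) :
    |mlKernel α β s| ≤ mlE α β (t ^ α) * s ^ (β - 1) := by
  rw [mlKernel, abs_mul, abs_of_pos (rpow_pos_of_pos hs _), mul_comm]
  gcongr
  refine abs_mlE_le hα hβ ?_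
  rw [abs_neg, abs_of_pos (rpow_pos_of_pos hs _)]
  gcongr

lemma eventually_mlKernel_pos (hα : 0 < α) (hβ : 0 < β) :
    ∀ᶠ t in 𝓝[>] 0, 0 < mlKernel α β t := by
  have hlim : Tendsto (fun t => mlE α β (-t ^ α)) (𝓝[>] 0) (𝓝 (1 / Gamma β)) := by
    rw [← mlE_zero (α := α)]
    refine ((continuous_mlE hα β).tendsto 0).comp ?_
    have : ContinuousAt (fun t : ℝ => -t ^ α) 0 := by
      fun_prop (disch := exact Or.inr hα.le)
    simpa [zero_rpow hα.ne'] using this.continuousWithinAt.tendsto (s := Ioi 0)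
  filter_upwards [hlim.eventually (lt_mem_nhds (by positivity)),
    self_mem_nhdsWithin] with t hE (ht : 0 < t)
  exact mul_pos (rpow_pos_of_pos ht _) hE

end

lemma integral_sub_rpow_mul_rpow {a b t : ℝ} (ha : 0 < a) (hb : 0 < b) (ht : 0 < t) :
    ∫ s in 0..t, (t - s) ^ (a - 1) * s ^ (b - 1) =
      Gamma a * Gamma b / Gamma (a + b) * t ^ (a + b - 1) := by
  have key := Complex.betaIntegral_scaled (b : ℂ) (a : ℂ) ht
  rw [Complex.betaIntegral_eq_Gamma_mul_div _ _ (by simpa) (by simpa)] at key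
  have hcongr : ∫ x in 0..t, (x : ℂ) ^ ((b : ℂ) - 1) * ((t : ℂ) - x) ^ ((a : ℂ) - 1) =
      ∫ x in 0..t, (((t - x) ^ (a - 1) * x ^ (b - 1) : ℝ) : ℂ) := by
    refine intervalIntegral.integral_congr fun x hx => ?_
    rw [uIcc_of_le ht.le] at hx
    push_cast
    rw [Complex.ofReal_cpow hx.1, Complex.ofReal_cpow (sub_nonneg.2 hx.2)]
    push_cast
    ring
  rw [hcongr, intervalIntegral.integral_ofReal, ← Complex.ofReal_add, ← Complex.ofReal_one,
    ← Complex.ofReal_sub, ← Complex.ofReal_cpow ht.le, Complex.Gamma_ofReal,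
    Complex.Gamma_ofReal, Complex.Gamma_ofReal] at key
  norm_cast at key
  rw [key, add_comm b a]
  ring

lemma intervalIntegrable_sub_rpow_mul_rpow {a b t : ℝ} (ha : 0 < a) (hb : 0 < b) (ht : 0 < t) :
    IntervalIntegrable (fun s => (t - s) ^ (a - 1) * s ^ (b - 1)) volume 0 t := by
  refine intervalIntegral.intervalIntegrable_of_integral_ne_zero ?_
  rw [integral_sub_rpow_mul_rpow ha hb ht]
  positivity

lemma intervalIntegrable_sub_rpow {c : ℝ} (hc : 0 < c) (a b : ℝ) :
    IntervalIntegrable (fun s => (b - s) ^ (c - 1)) volume a b := by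
  simpa using (intervalIntegral.intervalIntegrable_rpow' (by linarith : -1 < c - 1)
    (a := b - a) (b := 0)).comp_sub_left b

lemma integral_sub_rpow {c : ℝ} (hc : 0 < c) (a b : ℝ) :
    ∫ s in a..b, (b - s) ^ (c - 1) = (b - a) ^ c / c := by
  rw [intervalIntegral.integral_comp_sub_left (fun x => x ^ (c - 1)), sub_self,
    integral_rpow (Or.inl (by linarith)), sub_add_cancel, zero_rpow hc.ne', sub_zero]

section
variable {α β c t : ℝ}

lemma intervalIntegrable_sub_rpow_mul_mlKernel (hα : 0 < α) (hβ : 0 < β) (hc : 0 < c)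
    (ht : 0 < t) :
    IntervalIntegrable (fun s => (t - s) ^ (c - 1) * mlKernel α β s) volume 0 t := by
  refine ((intervalIntegrable_sub_rpow_mul_rpow hc hβ ht).const_mul (mlE α β (t ^ α))).mono_fun'
    (by have := measurable_mlKernel hα β; fun_prop) ?_
  rw [uIoc_of_le ht.le]
  filter_upwards [ae_restrict_mem measurableSet_Ioc] with s hs
  have hts : 0 ≤ t - s := sub_nonneg.2 hs.2
  rw [norm_mul, Real.norm_eq_abs, Real.norm_eq_abs, abs_of_nonneg (rpow_nonneg hts _),
    mul_left_comm]
  exact mul_le_mul_of_nonneg_left (abs_mlKernel_le hα hβ hs.1 hs.2) (rpow_nonneg hts _)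

lemma integral_sub_rpow_mul_rpow_div_Gamma (hc : 0 < c) {b : ℝ} (hb : 0 < b) (ht : 0 < t) :
    ∫ s in 0..t, (t - s) ^ (c - 1) * s ^ (b - 1) / Gamma b =
      Gamma c * (t ^ (b + c - 1) / Gamma (b + c)) := by
  rw [intervalIntegral.integral_div, integral_sub_rpow_mul_rpow hc hb ht, add_comm c b]
  field_simp [(Gamma_pos_of_pos hb).ne']

theorem integral_sub_rpow_mul_mlKernel (hα : 0 < α) (hβ : 0 < β) (hc : 0 < c) (ht : 0 < t) :
    ∫ s in 0..t, (t - s) ^ (c - 1) * mlKernel α β s = Gamma c * mlKernel α (β + c) t := by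
  have hb (n : ℕ) : 0 < n * α + β := by positivity
  set F : ℕ → ℝ → ℝ := fun n s =>
    (-1) ^ n * ((t - s) ^ (c - 1) * s ^ (n * α + β - 1) / Gamma (n * α + β))
  have hval (n : ℕ) : ∫ s in 0..t, (t - s) ^ (c - 1) * s ^ (n * α + β - 1) / Gamma (n * α + β) =
      Gamma c * (t ^ (n * α + (β + c) - 1) / Gamma (n * α + (β + c))) := by
    rw [integral_sub_rpow_mul_rpow_div_Gamma hc (hb n) ht, add_assoc]
  have hF_int (n : ℕ) : Integrable (F n) (volume.restrict (Ioc 0 t)) :=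
    (((intervalIntegrable_sub_rpow_mul_rpow hc (hb n) ht).div_const _).const_mul _).1
  have hF_norm (n : ℕ) : ∫ s in Ioc 0 t, ‖F n s‖ =
      Gamma c * (t ^ (n * α + (β + c) - 1) / Gamma (n * α + (β + c))) := by
    rw [← hval, intervalIntegral.integral_of_le ht.le]
    refine setIntegral_congr_fun measurableSet_Ioc fun s hs => ?_
    have := sub_nonneg.2 hs.2
    have := hs.1.le
    simp only [F, norm_mul, norm_pow, norm_neg, norm_one, one_pow, one_mul, Real.norm_eq_abs]
    exact abs_of_nonneg (by positivity)
  have hF_sum : Summable fun n => ∫ s in Ioc 0 t, ‖F n s‖ := by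
    refine (((summable_pow_div_Gamma hα (β + c) (t ^ α)).mul_left (t ^ (β + c - 1))).mul_left
      (Gamma c)).congr fun n => ?_
    rw [hF_norm, rpow_natCast_mul_add_sub_one ht]
    ring
  have hsum := hasSum_integral_of_summable_integral_norm hF_int hF_sum
  have hint (n : ℕ) : ∫ s in Ioc 0 t, F n s =
      Gamma c * ((-1) ^ n * (t ^ (n * α + (β + c) - 1) / Gamma (n * α + (β + c)))) := by
    rw [integral_const_mul, ← intervalIntegral.integral_of_le ht.le, hval]
    ring
  have hpt : ∀ s ∈ Ioc 0 t, ∑' n, F n s = (t - s) ^ (c - 1) * mlKernel α β s := fun s hs =>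
    (((hasSum_mlKernel hα β hs.1).mul_left ((t - s) ^ (c - 1))).congr_fun fun n => by
      simp only [F]; ring).tsum_eq
  rw [funext hint, setIntegral_congr_fun measurableSet_Ioc hpt,
    ← intervalIntegral.integral_of_le ht.le] at hsum
  exact hsum.unique ((hasSum_mlKernel hα (β + c) ht).mul_left _)

lemma intervalIntegrable_mlKernel (hα : 0 < α) (hβ : 0 < β) (ht : 0 < t) :
    IntervalIntegrable (mlKernel α β) volume 0 t := by
  simpa using intervalIntegrable_sub_rpow_mul_mlKernel hα hβ one_pos ht

lemma mlKernel_one_add (hα : 0 < α) (ht : 0 < t) :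
    mlKernel α (1 + α) t = 1 - mlKernel α 1 t := by
  rw [mlKernel_eq_sub hα 1 ht]
  simp

lemma integral_mlKernel_self (hα : 0 < α) (ht : 0 < t) :
    ∫ s in 0..t, mlKernel α α s = 1 - mlKernel α 1 t := by
  simpa [add_comm α 1, mlKernel_one_add hα ht] using
    integral_sub_rpow_mul_mlKernel hα hα one_pos ht

lemma integral_sub_rpow_mul_mlKernel_self (hα : 0 < α) (ht : 0 < t) :
    ∫ s in 0..t, (t - s) ^ (α - 1) * mlKernel α α s =
      t ^ (α - 1) - Gamma α * mlKernel α α t := by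
  rw [integral_sub_rpow_mul_mlKernel hα hα hα ht, mlKernel_eq_sub hα α ht,
    mul_sub, mul_div_cancel₀ _ (Gamma_pos_of_pos hα).ne']
  ring

end

lemma sub_rpow_le_div_rpow_mul_sub_rpow {p s σ τ : ℝ} (hp : p ≤ 0) (hs : 0 ≤ s) (hsσ : s < σ)
    (hστ : σ ≤ τ) : (τ - s) ^ p ≤ (τ / σ) ^ p * (σ - s) ^ p := by
  have hσ : 0 < σ := hs.trans_lt hsσ
  have hσs : 0 < σ - s := by linarith
  rw [← mul_rpow (div_pos (hσ.trans_le hστ) hσ).le hσs.le]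
  refine rpow_le_rpow_of_nonpos (mul_pos (div_pos (hσ.trans_le hστ) hσ) hσs) ?_ hp
  rw [div_mul_eq_mul_div, div_le_iff₀ hσ]
  nlinarith

section
variable {α : ℝ}

lemma integral_sub_rpow_mul_le {f : ℝ → ℝ} {c σ τ M : ℝ} (hc : 0 < c) (hστ : σ ≤ τ)
    (hf : IntervalIntegrable (fun s => (τ - s) ^ (c - 1) * f s) volume σ τ)
    (hM : ∀ s ∈ Ioo σ τ, f s ≤ M) :
    ∫ s in σ..τ, (τ - s) ^ (c - 1) * f s ≤ M * ((τ - σ) ^ c / c) :=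
  calc _ ≤ ∫ s in σ..τ, (τ - s) ^ (c - 1) * M :=
        intervalIntegral.integral_mono_on_of_le_Ioo hστ hf
          ((intervalIntegrable_sub_rpow hc σ τ).mul_const M) fun s hs =>
          mul_le_mul_of_nonneg_left (hM s hs) (rpow_nonneg (by linarith [hs.2]) _)
    _ = M * ((τ - σ) ^ c / c) := by
        rw [intervalIntegral.integral_mul_const, integral_sub_rpow hc, mul_comm]

lemma integral_sub_rpow_mul_mlKernel_self_le (hα : 0 < α) (hα1 : α ≤ 1) {σ τ : ℝ} (hσ : 0 < σ)
    (hστ : σ < τ) (hpos : ∀ s ∈ Ioo 0 σ, 0 < mlKernel α α s) :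
    ∫ s in 0..σ, (τ - s) ^ (α - 1) * mlKernel α α s ≤
      (τ / σ) ^ (α - 1) * (σ ^ (α - 1) - Gamma α * mlKernel α α σ) := by
  rw [← integral_sub_rpow_mul_mlKernel_self hα hσ, ← intervalIntegral.integral_const_mul]
  refine intervalIntegral.integral_mono_on_of_le_Ioo hσ.le
    ((intervalIntegrable_sub_rpow_mul_mlKernel hα hα hα (hσ.trans hστ)).mono_set
      (uIcc_subset_uIcc_left (by rw [uIcc_of_le (hσ.trans hστ).le]; exact ⟨hσ.le, hστ.le⟩)))
    ((intervalIntegrable_sub_rpow_mul_mlKernel hα hα hα hσ).const_mul _) fun s hs => ?_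
  rw [← mul_assoc]
  exact mul_le_mul_of_nonneg_right
    (sub_rpow_le_div_rpow_mul_sub_rpow (by linarith) hs.1.le hs.2 hστ.le) (hpos s hs).le

lemma mlKernel_self_pos_of_forall_Ioo (hα : 0 < α) (hα1 : α ≤ 1) {τ : ℝ} (hτ : 0 < τ)
    (hpos : ∀ s ∈ Ioo 0 τ, 0 < mlKernel α α s) : 0 < mlKernel α α τ := by
  have hΓ := Gamma_pos_of_pos hα
  obtain ⟨η, hη, hητ, hηα⟩ : ∃ η, 0 < η ∧ η ≤ τ / 2 ∧ η ^ α / α < Gamma α / 2 := by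
    refine ⟨min (τ / 2) ((α * Gamma α / 4) ^ α⁻¹), by positivity, min_le_left _ _, ?_⟩
    have : min (τ / 2) ((α * Gamma α / 4) ^ α⁻¹) ^ α ≤ α * Gamma α / 4 :=
      (rpow_le_rpow (by positivity) (min_le_right _ _) hα.le).trans_eq
        (rpow_inv_rpow (by positivity) hα.ne')
    rw [div_lt_iff₀ hα]
    nlinarith [mul_pos hα hΓ]
  obtain ⟨σ, hσ, hmax⟩ :=
    isCompact_Icc.exists_isMaxOn (nonempty_Icc.2 (by linarith : τ - η ≤ τ))
      ((continuousOn_mlKernel hα α).mono fun s hs => by simp only [mem_Ioi]; linarith [hs.1])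
  set M := mlKernel α α σ
  have hM : 0 < M :=
    (hpos (τ - η) ⟨by linarith, by linarith⟩).trans_le (hmax ⟨le_rfl, by linarith⟩)
  rcases hσ.2.eq_or_lt with rfl | hστ
  · exact hM
  have hσ0 : 0 < σ := by linarith [hσ.1]
  have hint := intervalIntegrable_sub_rpow_mul_mlKernel hα hα hα hτ
  have hσmem : σ ∈ uIcc 0 τ := by rw [uIcc_of_le hτ.le]; exact ⟨hσ0.le, hστ.le⟩
  have hsplit := intervalIntegral.integral_add_adjacent_intervals
    (hint.mono_set (uIcc_subset_uIcc_left hσmem)) (hint.mono_set (uIcc_subset_uIcc_right hσmem))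
  rw [integral_sub_rpow_mul_mlKernel_self hα hτ] at hsplit
  have hhead := integral_sub_rpow_mul_mlKernel_self_le hα hα1 hσ0 hστ fun s hs =>
    hpos s ⟨hs.1, hs.2.trans hστ⟩
  have htail := integral_sub_rpow_mul_le hα hστ.le
    (hint.mono_set (uIcc_subset_uIcc_right hσmem)) fun s hs =>
      hmax ⟨by linarith [hσ.1, hs.1], hs.2.le⟩
  have hδ : (τ - σ) ^ α / α ≤ η ^ α / α := by
    gcongr
    linarith [hσ.1]
  have hratio : 1 / 2 ≤ (τ / σ) ^ (α - 1) :=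
    calc 1 / 2 ≤ σ / τ := by rw [div_le_div_iff₀ two_pos hτ]; linarith [hσ.1]
      _ = (τ / σ) ^ (-1 : ℝ) := by rw [rpow_neg_one, inv_div]
      _ ≤ (τ / σ) ^ (α - 1) :=
          rpow_le_rpow_of_exponent_le (by rw [le_div_iff₀ hσ0]; linarith) (by linarith)
  have hτσ : (τ / σ) ^ (α - 1) * σ ^ (α - 1) = τ ^ (α - 1) := by
    rw [div_rpow hτ.le hσ0.le, div_mul_cancel₀ _ (rpow_pos_of_pos hσ0 _).ne']
  have h1 := mul_le_mul_of_nonneg_right hratio (mul_pos hΓ hM).le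
  have h2 := mul_le_mul_of_nonneg_left hδ hM.le
  have h3 := mul_lt_mul_of_pos_left hηα hM
  have : 0 < Gamma α * mlKernel α α τ := by linarith
  exact pos_of_mul_pos_right this hΓ.le

theorem mlKernel_self_pos (hα : 0 < α) (hα1 : α ≤ 1) {t : ℝ} (ht : 0 < t) :
    0 < mlKernel α α t := by
  obtain ⟨u, hu, hsmall⟩ :=
    mem_nhdsGT_iff_exists_Ioo_subset.1 (eventually_mlKernel_pos hα hα)
  by_contra! hneg
  have hlarge {s : ℝ} (hs : 0 < s) (hvs : mlKernel α α s ≤ 0) : u ≤ s :=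
    not_lt.1 fun hsu => (hsmall ⟨hs, hsu⟩ : 0 < mlKernel α α s).not_ge hvs
  set S := Ici u ∩ mlKernel α α ⁻¹' Iic 0
  have hS : IsClosed S := ((continuousOn_mlKernel hα α).mono fun s (hs : u ≤ s) =>
    hu.trans_le hs).preimage_isClosed_of_isClosed isClosed_Ici isClosed_Iic
  have hSbdd : BddBelow S := ⟨u, fun s hs => hs.1⟩
  have hτS : sInf S ∈ S := hS.csInf_mem ⟨t, hlarge ht hneg, hneg⟩ hSbdd
  refine (mlKernel_self_pos_of_forall_Ioo hα hα1 (hu.trans_le hτS.1) fun s hs => ?_).not_ge hτS.2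
  by_contra! hvs
  exact (csInf_le hSbdd ⟨hlarge hs.1 hvs, hvs⟩).not_gt hs.2

theorem mlKernel_one_antitoneOn (hα : 0 < α) (hα1 : α ≤ 1) :
    AntitoneOn (mlKernel α 1) (Ioi 0) := by
  intro s (hs : 0 < s) t (ht : 0 < t) hst
  have hdiff := intervalIntegral.integral_interval_sub_left
    (intervalIntegrable_mlKernel hα hα ht) (intervalIntegrable_mlKernel hα hα hs)
  rw [integral_mlKernel_self hα ht, integral_mlKernel_self hα hs] at hdiff
  have := intervalIntegral.integral_nonneg (μ := volume) hst fun r hr =>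
    (mlKernel_self_pos hα hα1 (hs.trans_le hr.1)).le
  linarith

theorem one_div_one_add_Gamma_mul_rpow_le_mlKernel (hα : 0 < α) (hα1 : α < 1) {t : ℝ}
    (ht : 0 < t) : 1 / (1 + Gamma (1 - α) * t ^ α) ≤ mlKernel α 1 t := by
  have hα1' : 0 < 1 - α := sub_pos.2 hα1
  have hmono : ∫ s in 0..t, t ^ (1 - α - 1) * mlKernel α α s ≤
      ∫ s in 0..t, (t - s) ^ (1 - α - 1) * mlKernel α α s :=
    intervalIntegral.integral_mono_on_of_le_Ioo ht.le
      ((intervalIntegrable_mlKernel hα hα ht).const_mul _)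
      (intervalIntegrable_sub_rpow_mul_mlKernel hα hα hα1' ht) fun s hs =>
      mul_le_mul_of_nonneg_right
        (rpow_le_rpow_of_nonpos (by linarith [hs.2]) (by linarith [hs.1]) (by linarith))
        (mlKernel_self_pos hα hα1.le hs.1).le
  rw [intervalIntegral.integral_const_mul, integral_mlKernel_self hα ht,
    integral_sub_rpow_mul_mlKernel hα hα hα1' ht, add_sub_cancel, sub_sub_cancel_left,
    rpow_neg ht.le, inv_mul_le_iff₀ (rpow_pos_of_pos ht α)] at hmono
  rw [div_le_iff₀ (by have := Gamma_pos_of_pos hα1'; positivity)]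
  linarith

theorem mlKernel_one_le_Gamma_div (hα : 0 < α) (hα1 : α ≤ 1) {t : ℝ} (ht : 0 < t) :
    mlKernel α 1 t ≤ Gamma (1 + α) / (Gamma (1 + α) + t ^ α) := by
  have hmono : ∫ s in 0..t, (t - s) ^ (α - 1) * mlKernel α 1 t ≤
      ∫ s in 0..t, (t - s) ^ (α - 1) * mlKernel α 1 s :=
    intervalIntegral.integral_mono_on_of_le_Ioo ht.le
      ((intervalIntegrable_sub_rpow hα 0 t).mul_const _)
      (intervalIntegrable_sub_rpow_mul_mlKernel hα one_pos hα ht) fun s hs =>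
      mul_le_mul_of_nonneg_left
        (mlKernel_one_antitoneOn hα hα1 (mem_Ioi.2 hs.1) (mem_Ioi.2 ht) hs.2.le)
        (rpow_nonneg (by linarith [hs.2]) _)
  rw [intervalIntegral.integral_mul_const, integral_sub_rpow hα, sub_zero,
    integral_sub_rpow_mul_mlKernel hα one_pos hα ht, mlKernel_one_add hα ht] at hmono
  rw [le_div_iff₀ (by positivity),
    add_comm 1 α, Gamma_add_one hα.ne']
  rw [div_mul_eq_mul_div, div_le_iff₀ hα] at hmono
  linarith
end

theorem ml_two_sided_bounds (α x : ℝ) (hα : α ∈ Set.Ioo (0:ℝ) 1) (hx : 0 < x) :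
    1 / (1 + Real.Gamma (1 - α) * x) ≤ mlE α 1 (-x) ∧
    mlE α 1 (-x) ≤ Real.Gamma (1 + α) / (Real.Gamma (1 + α) + x) := by
  obtain ⟨hα0, hα1⟩ := hα
  have ht : 0 < x ^ α⁻¹ := rpow_pos_of_pos hx _
  have htα : (x ^ α⁻¹) ^ α = x := rpow_inv_rpow hx.le hα0.ne'
  have hE : mlE α 1 (-x) = mlKernel α 1 (x ^ α⁻¹) := by simp [mlKernel, htα]
  have hlower := one_div_one_add_Gamma_mul_rpow_le_mlKernel hα0 hα1 ht
  have hupper := mlKernel_one_le_Gamma_div hα0 hα1.le ht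
  rw [htα] at hlower hupper
  rw [hE]
  exact ⟨hlower, hupper⟩
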